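/- Let 1 ≤ p ≤ 2, q = max(p, 2(p−1)²), k ∈ ℕ, γ > 0, and ρ ∈ ℝ^k with ρ₁ ≥ ρ₂ ≥ ⋯ ≥ ρ_k > 0. Define L_{ρ,γ}(x) = ∑_{j=1}^k ( (γ²ρ_j² + x_j²)^{p/2} − (γρ_j)^p ) and, for 0 ≤ β < β* := 2γ^{2−p} / (q ρ₁^p), define f_{ρ,β,γ}(x) = ∑_{j=1}^k x_j²/ρ_j² − β L_{ρ,γ}(x). Then f_{ρ,β,γ} is a non-negative convex function on ℝ^k. -/

import Mathlib

/-!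
Set `c_j = (γρ_j)²`. The function splits as `∑_j g_j(x_j)` with
`g_j(t) = φ_j(t²) + β c_j^{p/2}` and `φ_j(s) = s/ρ_j² − β (c_j + s)^{p/2}`.
On `s ≥ 0`, `φ_j` is convex (linear minus concave), and its slope is at least
`1/ρ_j² − β (p/2) c_j^{p/2−1}`, which is nonnegative exactly when `β p γ^{p−2} ρ_j^p ≤ 2`;
this follows from the bound on `β` since `p ≤ q` and `ρ_j ≤ ρ₁`. So `φ_j` is nondecreasing,
hence `φ_j(t²)` is convex in `t` and at least `φ_j(0) = −β c_j^{p/2}`, i.e. `g_j ≥ 0`.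
-/

open Real Set

noncomputable section

/-- The function `L_{ρ,γ}` for `1 ≤ p ≤ 2`. -/
def Lfun {k : ℕ} (p γ : ℝ) (ρ : Fin k → ℝ) (x : Fin k → ℝ) : ℝ :=
  ∑ j, ((γ ^ 2 * ρ j ^ 2 + x j ^ 2) ^ (p / 2) - (γ * ρ j) ^ p)

theorem ConvexOn.fun_sum {𝕜 E β ι : Type*} [Semiring 𝕜] [PartialOrder 𝕜] [AddCommMonoid E]
    [SMul 𝕜 E] [AddCommMonoid β] [PartialOrder β] [IsOrderedAddMonoid β] [Module 𝕜 β]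
    {s : Set E} {f : ι → E → β} (t : Finset ι) (hs : Convex 𝕜 s)
    (h : ∀ i ∈ t, ConvexOn 𝕜 s (f i)) : ConvexOn 𝕜 s (fun x => ∑ i ∈ t, f i x) := by
  classical
  induction t using Finset.induction_on with
  | empty => simpa using convexOn_const 0 hs
  | insert i t hi ih =>
    simp_rw [Finset.sum_insert hi]
    exact (h i (Finset.mem_insert_self i t)).add
      (ih fun j hj => h j (Finset.mem_insert_of_mem hj))

namespace Real

theorem sq_rpow_div_two {x : ℝ} (hx : 0 ≤ x) (y : ℝ) : (x ^ 2) ^ (y / 2) = x ^ y := by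
  rw [← rpow_natCast_mul hx]
  norm_num [mul_div_cancel₀]

theorem rpow_le_rpow_add_mul_rpow_sub_one_mul_sub {α u v : ℝ} (hα0 : 0 ≤ α) (hα1 : α ≤ 1)
    (hu : 0 < u) (hv : 0 ≤ v) : v ^ α ≤ u ^ α + α * u ^ (α - 1) * (v - u) := by
  have bernoulli := rpow_one_add_le_one_add_mul_self (s := (v - u) / u)
    (by rw [le_div_iff₀ hu]; linarith) hα0 hα1
  rw [show 1 + (v - u) / u = v / u by field_simp; ring] at bernoulli
  calc v ^ α = u ^ α * (v / u) ^ α := by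
        rw [← mul_rpow hu.le (by positivity), mul_div_cancel₀ _ hu.ne']
    _ ≤ u ^ α * (1 + α * ((v - u) / u)) := by gcongr
    _ = u ^ α + α * u ^ (α - 1) * (v - u) := by rw [rpow_sub_one hu.ne']; field_simp

end Real

section PerturbedPower

variable {α β c a : ℝ}

theorem convexOn_mul_sub_mul_add_rpow (hα0 : 0 ≤ α) (hα1 : α ≤ 1) (hc : 0 ≤ c) (hβ : 0 ≤ β) :
    ConvexOn ℝ (Ici 0) (fun s => a * s - β * (c + s) ^ α) := by
  have hconcave : ConcaveOn ℝ (Ici 0) (fun s => (c + s) ^ α) :=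
    ((concaveOn_rpow hα0 hα1).translate_right c).subset
      (fun s (hs : 0 ≤ s) => show 0 ≤ c + s by positivity) (convex_Ici 0)
  exact ((a • LinearMap.id : ℝ →ₗ[ℝ] ℝ).convexOn (convex_Ici 0)).sub (hconcave.smul hβ)

theorem monotoneOn_mul_sub_mul_add_rpow (hα0 : 0 ≤ α) (hα1 : α ≤ 1) (hc : 0 < c) (hβ : 0 ≤ β)
    (ha : β * α * c ^ (α - 1) ≤ a) : MonotoneOn (fun s => a * s - β * (c + s) ^ α) (Ici 0) := by
  intro s (hs : 0 ≤ s) t (ht : 0 ≤ t) hst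
  have tangent := rpow_le_rpow_add_mul_rpow_sub_one_mul_sub hα0 hα1
    (by positivity : 0 < c + s) (by positivity : 0 ≤ c + t)
  have slope : (c + s) ^ (α - 1) ≤ c ^ (α - 1) :=
    rpow_le_rpow_of_nonpos hc (by linarith) (by linarith)
  have increment : β * (c + t) ^ α - β * (c + s) ^ α ≤ a * (t - s) :=
    calc β * (c + t) ^ α - β * (c + s) ^ α ≤ β * α * (c + s) ^ (α - 1) * (t - s) := by
          linarith [mul_le_mul_of_nonneg_left tangent hβ]
      _ ≤ β * α * c ^ (α - 1) * (t - s) := by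
          have := mul_nonneg hβ hα0
          gcongr
      _ ≤ a * (t - s) := by gcongr
  dsimp only
  linarith

theorem mul_sq_sub_rpow_add_sq_nonneg (hα0 : 0 ≤ α) (hα1 : α ≤ 1) (hc : 0 < c) (hβ : 0 ≤ β)
    (ha : β * α * c ^ (α - 1) ≤ a) (t : ℝ) : 0 ≤ a * t ^ 2 - β * ((c + t ^ 2) ^ α - c ^ α) := by
  have := monotoneOn_mul_sub_mul_add_rpow hα0 hα1 hc hβ ha (le_refl (0 : ℝ))
    (sq_nonneg t) (sq_nonneg t)
  simp only [mul_zero, add_zero, zero_sub] at this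
  linarith

theorem convexOn_mul_sq_sub_rpow_add_sq (hα0 : 0 ≤ α) (hα1 : α ≤ 1) (hc : 0 < c) (hβ : 0 ≤ β)
    (ha : β * α * c ^ (α - 1) ≤ a) :
    ConvexOn ℝ univ (fun t : ℝ => a * t ^ 2 - β * ((c + t ^ 2) ^ α - c ^ α)) := by
  have hsq : (fun t : ℝ => t ^ 2) '' univ = Ici 0 := by
    rw [image_univ]
    ext y
    exact ⟨by rintro ⟨t, rfl⟩; exact sq_nonneg t, fun hy => ⟨√y, sq_sqrt hy⟩⟩
  have hcomp := ConvexOn.comp (g := fun s => a * s - β * (c + s) ^ α)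
    (by rw [hsq]; exact convexOn_mul_sub_mul_add_rpow hα0 hα1 hc.le hβ) even_two.convexOn_pow
    (by rw [hsq]; exact monotoneOn_mul_sub_mul_add_rpow hα0 hα1 hc hβ ha)
  exact (hcomp.add_const (β * c ^ α)).congr fun t _ => by
    simp only [Pi.add_apply, Function.comp_apply]
    ring

end PerturbedPower

theorem mul_half_mul_rpow_le_one_div_sq {p γ r β : ℝ} (hγ : 0 < γ) (hr : 0 < r)
    (h : β * (p * r ^ p) ≤ 2 * γ ^ (2 - p)) :
    β * (p / 2) * (γ ^ 2 * r ^ 2) ^ (p / 2 - 1) ≤ 1 / r ^ 2 := by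
  have hpow : (γ ^ 2 * r ^ 2) ^ (p / 2 - 1) = r ^ p / γ ^ (2 - p) / r ^ 2 := by
    rw [← mul_pow, show p / 2 - 1 = (p - 2) / 2 by ring, sq_rpow_div_two (by positivity),
      mul_rpow hγ.le hr.le, rpow_sub hr, show 2 - p = -(p - 2) by ring, rpow_neg hγ.le, rpow_two]
    field_simp
  calc β * (p / 2) * (γ ^ 2 * r ^ 2) ^ (p / 2 - 1)
      = β * (p * r ^ p) / (2 * γ ^ (2 - p)) / r ^ 2 := by rw [hpow]; field_simp
    _ ≤ 1 / r ^ 2 := by gcongr; exact (div_le_one (by positivity)).2 h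

theorem sum_div_sq_sub_mul_Lfun_eq_sum {k : ℕ} {p γ β : ℝ} {ρ : Fin k → ℝ} (hγ : 0 ≤ γ)
    (hρ : ∀ j, 0 ≤ ρ j) (x : Fin k → ℝ) :
    (∑ j, x j ^ 2 / ρ j ^ 2) - β * Lfun p γ ρ x = ∑ j, (1 / ρ j ^ 2 * x j ^ 2 -
      β * ((γ ^ 2 * ρ j ^ 2 + x j ^ 2) ^ (p / 2) - (γ ^ 2 * ρ j ^ 2) ^ (p / 2))) := by
  rw [Lfun, Finset.mul_sum, ← Finset.sum_sub_distrib]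
  refine Finset.sum_congr rfl fun j _ => ?_
  rw [← mul_pow, sq_rpow_div_two (mul_nonneg hγ (hρ j))]
  ring

/-- For `1 ≤ p ≤ 2`, `q = max(p, 2(p−1)²)` and `0 ≤ β < 2γ^{2−p}/(q ρ₁^p)`, the function
`f_{ρ,β,γ}(x) = ∑ x_j²/ρ_j² − β L_{ρ,γ}(x)` is non-negative and convex on `ℝᵏ`. -/
theorem f_nonneg_and_convex_le_two (p : ℝ) (hp1 : 1 ≤ p) (hp2 : p ≤ 2)
    (k : ℕ) (hk : 0 < k) (γ : ℝ) (hγ : 0 < γ)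
    (ρ : Fin k → ℝ) (hρpos : ∀ j, 0 < ρ j) (hρanti : Antitone ρ)
    (β : ℝ) (hβ0 : 0 ≤ β)
    (hβ : β < 2 * γ ^ (2 - p) / (max p (2 * (p - 1) ^ 2) * ρ ⟨0, hk⟩ ^ p)) :
    (∀ x : Fin k → ℝ, 0 ≤ (∑ j, x j ^ 2 / ρ j ^ 2) - β * Lfun p γ ρ x) ∧
      ConvexOn ℝ univ (fun x : Fin k → ℝ => (∑ j, x j ^ 2 / ρ j ^ 2) - β * Lfun p γ ρ x) := by
  have hα0 : 0 ≤ p / 2 := by linarith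
  have hα1 : p / 2 ≤ 1 := by linarith
  have hc : ∀ j, 0 < γ ^ 2 * ρ j ^ 2 := fun j => by have := hρpos j; positivity
  have hslope : ∀ j, β * (p / 2) * (γ ^ 2 * ρ j ^ 2) ^ (p / 2 - 1) ≤ 1 / ρ j ^ 2 := by
    intro j
    refine mul_half_mul_rpow_le_one_div_sq hγ (hρpos j) ?_
    have := hρpos j
    calc β * (p * ρ j ^ p) ≤ β * (max p (2 * (p - 1) ^ 2) * ρ ⟨0, hk⟩ ^ p) := by
          gcongr
          · exact le_max_left _ _
          · exact hρanti (Nat.zero_le _)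
      _ ≤ 2 * γ ^ (2 - p) := ((lt_div_iff₀ (by have := hρpos ⟨0, hk⟩; positivity)).1 hβ).le
  have hsplit := sum_div_sq_sub_mul_Lfun_eq_sum (p := p) (β := β) hγ.le fun j => (hρpos j).le
  refine ⟨fun x => hsplit x ▸ Finset.sum_nonneg fun j _ =>
    mul_sq_sub_rpow_add_sq_nonneg hα0 hα1 (hc j) hβ0 (hslope j) (x j), ?_⟩
  refine (ConvexOn.fun_sum _ convex_univ fun j _ => ?_).congr fun x _ => (hsplit x).symm
  exact (convexOn_mul_sq_sub_rpow_add_sq hα0 hα1 (hc j) hβ0 (hslope j)).comp_linearMap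
    (LinearMap.proj (R := ℝ) (φ := fun _ : Fin k => ℝ) j)
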